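/- Let A ⊆ ℤ⁺ be geometrically sparse. Then for every n ≥ 1 there exist real numbers c, d > 0 such that every nonzero a ∈ Σ_n(±A) can be written as a = a_1 + ⋯ + a_k + q, where 0 ≤ k ≤ n, each a_i ∈ ±A with |a_i| < c·|a|, and q ∈ ℤ with |q| ≤ d. -/

import Mathlib

/-
Replace each summand `aᵢ ∈ ±A` of `a` by the real number `±f(|aᵢ|)`, at distance at most `C`.
Discard subfamilies of these reals summing to zero (the corresponding integers add up to at most
`n C`), until the remaining family is zero-sum-free. For a zero-sum-free family of at most `m`
reals with absolute values in a geometric set `S`, the sum dominates every term: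
`ε |uᵢ| ≤ |∑ u|` with `ε > 0` depending only on `m`. This is proved by induction on `m`: if some
term is smaller than the largest one by a factor `K = 2/εₘ₋₁ + 1`, drop it; otherwise every ratio
`max |u| / |uᵢ|` lies in the closed discrete, hence locally finite, set of ratios of `S` below `K`,
so the normalised sum takes finitely many values and a nonzero one is bounded away from `0`.
-/

open Filter Pointwise

/-- The `k`-fold sumset `X + ⋯ + X` (`k` times) of a set of integers. -/
def kFold (X : Set ℤ) (k : ℕ) : Set ℤ :=
  {z : ℤ | ∃ f : Fin k → ℤ, (∀ i, f i ∈ X) ∧ z = ∑ i, f i}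

/-- `Σ_n(X) = ⋃_{k=1}^n k(X)`. -/
def sigmaSum (n : ℕ) (X : Set ℤ) : Set ℤ :=
  ⋃ k ∈ Finset.Icc 1 n, kFold X k

/-- `±A = {x ∈ ℤ : |x| ∈ A}`. -/
def pmSet (A : Set ℤ) : Set ℤ := {x : ℤ | |x| ∈ A}

/-- The lower asymptotic density of a set of naturals:
`liminf_{n → ∞} |A ∩ {1,…,n}| / n`. -/
noncomputable def lowerDensity (A : Set ℕ) : ℝ :=
  Filter.liminf (fun n : ℕ => (Set.ncard (A ∩ Set.Icc 1 n) : ℝ) / n) Filter.atTop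

/-- The set of naturals whose image in `ℤ` lies in `S`. -/
def intSetToNat (S : Set ℤ) : Set ℕ := {n : ℕ | (n : ℤ) ∈ S}

/-- `A ⊆ ℤ` is sufficiently sparse if `δ̲(Σ_n(±A) ∩ ℕ) = 0` for all `n ≥ 1`. -/
def SuffSparse (A : Set ℤ) : Prop :=
  ∀ n : ℕ, 1 ≤ n → lowerDensity (intSetToNat (sigmaSum n (pmSet A))) = 0

/-- A set `S` of (positive) reals is geometric if `{s/t : s, t ∈ S, t ≤ s}` is a closed
and discrete subset of `ℝ`. -/
def IsGeometric (S : Set ℝ) : Prop :=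
  IsClosed {x : ℝ | ∃ s ∈ S, ∃ t ∈ S, t ≤ s ∧ x = s / t} ∧
    DiscreteTopology {x : ℝ | ∃ s ∈ S, ∃ t ∈ S, t ≤ s ∧ x = s / t}

/-- `A ⊆ ℤ` is geometrically sparse if there is `f : A → ℝ⁺` with `f(A)` geometric and
`sup_{a ∈ A} |a − f(a)| < ∞`. -/
def GeomSparse (A : Set ℤ) : Prop :=
  ∃ f : ℤ → ℝ, (∀ a ∈ A, 0 < f a) ∧ IsGeometric (f '' A) ∧
    ∃ C : ℝ, ∀ a ∈ A, |(a : ℝ) - f a| ≤ C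

open Finset

section ZeroSumFree

variable {ι M : Type*} [AddCommMonoid M]

def ZeroSumFree (u : ι → M) (T : Finset ι) : Prop :=
  ∀ P ⊆ T, P.Nonempty → ∑ i ∈ P, u i ≠ 0

theorem ZeroSumFree.mono {u : ι → M} {T T' : Finset ι} (h : ZeroSumFree u T) (hT' : T' ⊆ T) :
    ZeroSumFree u T' :=
  fun P hP => h P (hP.trans hT')

theorem ZeroSumFree.ne_zero {u : ι → M} {T : Finset ι} (h : ZeroSumFree u T) {i : ι}
    (hi : i ∈ T) : u i ≠ 0 := by
  simpa using h {i} (singleton_subset_iff.2 hi) (singleton_nonempty i)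

theorem exists_subset_sum_sdiff_eq_zero_zeroSumFree [DecidableEq ι] (T : Finset ι) (u : ι → M) :
    ∃ T' ⊆ T, ∑ i ∈ T \ T', u i = 0 ∧ ZeroSumFree u T' := by
  classical
  obtain ⟨T', hT', hmin⟩ := (T.powerset.filter fun T' => ∑ i ∈ T \ T', u i = 0).exists_min_image
    card ⟨T, by simp⟩
  rw [mem_filter, mem_powerset] at hT'
  refine ⟨T', hT'.1, hT'.2, fun P hPT' hPne hP0 => ?_⟩
  have hsplit : T \ (T' \ P) = (T \ T') ∪ P := by
    rw [sdiff_sdiff_right', inf_eq_right.2 (hPT'.trans hT'.1), sup_eq_union]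
  have hdisj : Disjoint (T \ T') P := disjoint_sdiff_self_left.mono_right hPT'
  have := hmin (T' \ P) (by
    rw [mem_filter, mem_powerset, hsplit, sum_union hdisj, hT'.2, hP0, add_zero]
    exact ⟨sdiff_subset.trans hT'.1, rfl⟩)
  exact (card_lt_card (sdiff_ssubset hPT' hPne)).not_ge this

end ZeroSumFree

def ratioSet (S : Set ℝ) : Set ℝ := {x : ℝ | ∃ s ∈ S, ∃ t ∈ S, t ≤ s ∧ x = s / t}

theorem IsGeometric.finite_ratioSet_inter_Icc {S : Set ℝ} (hS : IsGeometric S) (a b : ℝ) :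
    (ratioSet S ∩ Set.Icc a b).Finite :=
  (isCompact_Icc.of_isClosed_subset (hS.1.inter isClosed_Icc) Set.inter_subset_right).finite
    ⟨hS.2.of_subset Set.inter_subset_left⟩

theorem Set.Finite.exists_pos_le_abs_sum {ι : Type*} [Fintype ι] {G : Set ℝ} (hG : G.Finite) :
    ∃ η > 0, ∀ (T : Finset ι) (y : ι → ℝ), (∀ i ∈ T, y i ∈ G) → ∑ i ∈ T, y i ≠ 0 →
      η ≤ |∑ i ∈ T, y i| := by
  classical
  set sums := (fun y : ι → ℝ => ∑ i, y i) '' Set.univ.pi fun _ => insert 0 G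
  have hsums : sums.Finite := (Set.Finite.pi fun _ => hG.insert 0).image _
  have hopen : IsOpen (sums \ {0})ᶜ := (hsums.sdiff (t := {0})).isClosed.isOpen_compl
  obtain ⟨η, hη, hball⟩ := Metric.mem_nhds_iff.1 (hopen.mem_nhds (x := 0) (by simp))
  refine ⟨η, hη, fun T y hy hne => not_lt.1 fun hlt => hball (by simpa using hlt) ⟨?_, hne⟩⟩
  refine ⟨fun i => if i ∈ T then y i else 0, fun i _ => ?_, by simp [sum_ite_mem]⟩
  dsimp only
  split_ifs with hi
  exacts [Set.mem_insert_of_mem _ (hy i hi), Set.mem_insert _ _]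

namespace IsGeometric

variable {S : Set ℝ} (ι : Type*) [Fintype ι]

theorem exists_pos_mul_abs_le_abs_sum_of_le_mul (hS : IsGeometric S) (K : ℝ) :
    ∃ η > 0, ∀ (T : Finset ι) (u : ι → ℝ), ∀ j ∈ T, (∀ i ∈ T, |u i| ∈ S) →
      (∀ i ∈ T, |u i| ≤ |u j| ∧ |u j| ≤ K * |u i|) → ∑ i ∈ T, u i ≠ 0 →
      η * |u j| ≤ |∑ i ∈ T, u i| := by
  set G := {y : ℝ | |y|⁻¹ ∈ ratioSet S ∩ Set.Icc 0 K}
  have hG : G.Finite := by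
    refine (((hS.finite_ratioSet_inter_Icc 0 K).image (·⁻¹)).union
      ((hS.finite_ratioSet_inter_Icc 0 K).image (-·⁻¹))).subset fun y hy => ?_
    rcases abs_choice y with hy' | hy'
    · exact Or.inl ⟨_, hy, by simp [hy']⟩
    · exact Or.inr ⟨_, hy, by simp [hy']⟩
  obtain ⟨η, hη, hsum⟩ := hG.exists_pos_le_abs_sum (ι := ι)
  refine ⟨η, hη, fun T u j hj huS hcomp hne => ?_⟩
  have hM : 0 < |u j| := by
    by_contra! h
    exact hne (sum_eq_zero fun i hi => abs_nonpos_iff.1 ((hcomp i hi).1.trans h))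
  have hyG : ∀ i ∈ T, u i / |u j| ∈ G := fun i hi => by
    have hui : 0 < |u i| := by
      by_contra! h
      have := (hcomp i hi).2
      rw [le_antisymm h (abs_nonneg _), mul_zero] at this
      linarith
    change |(u i / |u j|)|⁻¹ ∈ ratioSet S ∩ Set.Icc 0 K
    rw [abs_div, abs_abs, inv_div]
    refine ⟨⟨_, huS j hj, _, huS i hi, (hcomp i hi).1, rfl⟩, by positivity,
      (div_le_iff₀ hui).2 (hcomp i hi).2⟩
  have := hsum T _ hyG (by rw [← sum_div]; exact div_ne_zero hne hM.ne')
  rwa [← sum_div, abs_div, abs_abs, le_div_iff₀ hM] at this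

theorem exists_pos_mul_abs_le_abs_sum (hS : IsGeometric S) (m : ℕ) :
    ∃ ε > 0, ∀ (T : Finset ι) (u : ι → ℝ), #T ≤ m → (∀ i ∈ T, |u i| ∈ S) →
      ZeroSumFree u T → ∀ i ∈ T, ε * |u i| ≤ |∑ j ∈ T, u j| := by
  classical
  induction m with
  | zero => exact ⟨1, one_pos, fun T u hT _ _ i hi => by simp_all⟩
  | succ m ih =>
    obtain ⟨ε, hε, hsmall⟩ := ih
    obtain ⟨η, hη, hcomp⟩ := hS.exists_pos_mul_abs_le_abs_sum_of_le_mul ι (2 / ε + 1)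
    refine ⟨min (ε / 2) η, by positivity, fun T u hcard huS hfree i hi => ?_⟩
    obtain ⟨j, hj, hjmax⟩ := T.exists_max_image (fun k => |u k|) ⟨i, hi⟩
    suffices min (ε / 2) η * |u j| ≤ |∑ k ∈ T, u k| from
      (mul_le_mul_of_nonneg_left (hjmax i hi) (by positivity)).trans this
    have hM : 0 < |u j| := abs_pos.2 (hfree.ne_zero hj)
    by_cases hK : ∀ k ∈ T, |u j| ≤ (2 / ε + 1) * |u k|
    · exact (mul_le_mul_of_nonneg_right (min_le_right _ _) hM.le).trans
        (hcomp T u j hj huS (fun k hk => ⟨hjmax k hk, hK k hk⟩) (hfree T subset_rfl ⟨i, hi⟩))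
    push Not at hK
    obtain ⟨k, hk, hkj⟩ := hK
    have hk_small : |u k| ≤ ε / 2 * |u j| := by
      have : 2 / ε * |u k| ≤ |u j| := by nlinarith [abs_nonneg (u k)]
      rw [div_mul_eq_mul_div, div_le_iff₀ hε] at this
      linarith
    have hjk : j ≠ k := by
      rintro rfl
      have : 0 < 2 / ε * |u j| := by positivity
      linarith
    have hrest := hsmall (T.erase k) u (by rw [card_erase_of_mem hk]; omega)
      (fun i hi => huS i (mem_of_mem_erase hi)) (hfree.mono (erase_subset k T)) j
      (mem_erase.2 ⟨hjk, hj⟩)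
    rw [← add_sum_erase T u hk]
    calc min (ε / 2) η * |u j| ≤ ε / 2 * |u j| := by gcongr; exact min_le_left _ _
      _ ≤ |∑ i ∈ T.erase k, u i| - |u k| := by linarith
      _ ≤ |u k + ∑ i ∈ T.erase k, u i| := by
        rw [add_comm]; exact abs_sub_abs_le_abs_add _ _

end IsGeometric

theorem exists_finset_of_mem_sigmaSum {n : ℕ} {X : Set ℤ} {a : ℤ} (ha : a ∈ sigmaSum n X) :
    ∃ (T : Finset (Fin n)) (w : Fin n → ℤ), (∀ i ∈ T, w i ∈ X) ∧ a = ∑ i ∈ T, w i := by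
  simp only [sigmaSum, Set.mem_iUnion, mem_Icc] at ha
  obtain ⟨k, ⟨-, hkn⟩, g, hgX, rfl⟩ := ha
  have hinj := Fin.castLE_injective hkn
  refine ⟨univ.map (Fin.castLEEmb hkn), Function.extend (Fin.castLE hkn) g 0, ?_, ?_⟩
  · simp [hinj.extend_apply, hgX]
  · simp [hinj.extend_apply]

theorem exists_abs_mem_image_abs_sub_le_of_mem_pmSet {A : Set ℤ} {f : ℤ → ℝ} {C : ℝ}
    (hf : ∀ a ∈ A, 0 < f a) (hC : ∀ a ∈ A, |(a : ℝ) - f a| ≤ C) {z : ℤ} (hz : z ∈ pmSet A) :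
    ∃ v : ℝ, |v| ∈ f '' A ∧ |(z : ℝ) - v| ≤ C := by
  obtain ⟨b, hb, h | h⟩ : ∃ b ∈ A, z = b ∨ z = -b :=
    ⟨|z|, hz, by rcases abs_choice z with h | h <;> omega⟩
  all_goals subst z
  · exact ⟨f b, by rw [abs_of_pos (hf b hb)]; exact Set.mem_image_of_mem f hb, hC b hb⟩
  · refine ⟨-f b, by rw [abs_neg, abs_of_pos (hf b hb)]; exact Set.mem_image_of_mem f hb, ?_⟩
    rw [Int.cast_neg, neg_sub_neg, abs_sub_comm]
    exact hC b hb

theorem abs_sum_sub_sum_le {ι : Type*} (T : Finset ι) {x y : ι → ℝ} {C : ℝ}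
    (h : ∀ i ∈ T, |x i - y i| ≤ C) : |∑ i ∈ T, x i - ∑ i ∈ T, y i| ≤ #T * C := by
  rw [← sum_sub_distrib]
  exact (abs_sum_le_sum_abs _ _).trans (by simpa using sum_le_sum h)

theorem exists_subset_abs_sum_sdiff_le {ι : Type*} [DecidableEq ι] {T : Finset ι}
    {x v : ι → ℝ} {ε C : ℝ} (hε : 0 < ε) (hC : 0 ≤ C) (hxv : ∀ i ∈ T, |x i - v i| ≤ C)
    (hv : ∀ T' ⊆ T, ZeroSumFree v T' → ∀ j ∈ T', ε * |v j| ≤ |∑ i ∈ T', v i|) :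
    ∃ T' ⊆ T, |∑ i ∈ T \ T', x i| ≤ #T * C ∧
      ∀ j ∈ T', |x j| ≤ (|∑ i ∈ T, x i| + #T * C) / ε + C := by
  obtain ⟨T', hT'T, hv0, hfree⟩ := exists_subset_sum_sdiff_eq_zero_zeroSumFree T v
  refine ⟨T', hT'T, ?_, fun j hj => ?_⟩
  · have := abs_sum_sub_sum_le (T \ T') fun i hi => hxv i (sdiff_subset hi)
    rw [hv0, sub_zero] at this
    exact this.trans (by gcongr; exact sdiff_subset)
  · have hvj : ε * |v j| ≤ |∑ i ∈ T, x i| + #T * C := by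
      have hsum : ∑ i ∈ T', v i = ∑ i ∈ T, v i := by rw [← sum_sdiff hT'T, hv0, zero_add]
      have := abs_sub_abs_le_abs_sub (∑ i ∈ T, v i) (∑ i ∈ T, x i)
      rw [abs_sub_comm] at this
      linarith [hsum ▸ hv T' hT'T hfree j hj, abs_sum_sub_sum_le T hxv]
    have := abs_sub_abs_le_abs_sub (x j) (v j)
    have := (le_div_iff₀ hε).2 (mul_comm ε _ ▸ hvj)
    linarith [hxv j (hT'T hj)]

theorem div_add_lt_mul {s N C ε : ℝ} (hε : 0 < ε) (hN : 0 ≤ N) (hC : 0 ≤ C) (hs : 1 ≤ s) :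
    (s + N * C) / ε + C < ((1 + N * C) / ε + C + 1) * s := by
  have : (s + N * C) / ε ≤ (1 + N * C) / ε * s := by
    rw [div_mul_eq_mul_div]
    gcongr
    nlinarith [mul_nonneg (mul_nonneg hN hC) (sub_nonneg.2 hs)]
  nlinarith [mul_nonneg hC (sub_nonneg.2 hs)]

theorem geomSparse_decomposition_general (A : Set ℤ) (hGS : GeomSparse A) :
    ∀ n : ℕ, 1 ≤ n → ∃ c d : ℝ, 0 < c ∧ 0 < d ∧
      ∀ a ∈ sigmaSum n (pmSet A), a ≠ 0 →
        ∃ k : ℕ, k ≤ n ∧ ∃ (g : Fin k → ℤ) (q : ℤ),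
          (∀ i, g i ∈ pmSet A ∧ (|g i| : ℝ) < c * (|a| : ℝ)) ∧
          (|q| : ℝ) ≤ d ∧ a = (∑ i, g i) + q := by
  classical
  intro n _
  obtain ⟨f, hfpos, hgeom, C₀, hC₀⟩ := hGS
  set C := max C₀ 0
  have hC : ∀ a ∈ A, |(a : ℝ) - f a| ≤ C := fun a ha => (hC₀ a ha).trans (le_max_left _ _)
  have hC0 : 0 ≤ C := le_max_right _ _
  obtain ⟨ε, hε, hkey⟩ := hgeom.exists_pos_mul_abs_le_abs_sum (Fin n) n
  refine ⟨(1 + n * C) / ε + C + 1, n * C + 1, by positivity, by positivity, fun a ha ha0 => ?_⟩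
  obtain ⟨T, w, hwA, rfl⟩ := exists_finset_of_mem_sigmaSum ha
  choose! v hvS hwv using fun i (hi : i ∈ T) =>
    exists_abs_mem_image_abs_sub_le_of_mem_pmSet hfpos hC (hwA i hi)
  have hTn : #T ≤ n := (card_le_univ T).trans_eq (Fintype.card_fin n)
  have hCn : (#T : ℝ) * C ≤ n * C := by gcongr
  obtain ⟨T', hT'T, hq, hsmall⟩ := exists_subset_abs_sum_sdiff_le hε hC0 hwv fun T' hT' =>
    hkey T' v ((card_le_card hT').trans hTn) fun i hi => hvS i (hT' hi)
  have ha1 : (1 : ℝ) ≤ |(∑ i ∈ T, w i : ℝ)| := by exact_mod_cast Int.one_le_abs ha0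
  refine ⟨#T', (card_le_card hT'T).trans hTn, fun i => w (T'.equivFin.symm i),
    ∑ i ∈ T \ T', w i, fun i => ⟨hwA _ (hT'T (T'.equivFin.symm i).2), ?_⟩, ?_, ?_⟩
  · push_cast
    calc _ ≤ (|(∑ i ∈ T, w i : ℝ)| + #T * C) / ε + C := hsmall _ (T'.equivFin.symm i).2
      _ ≤ (|(∑ i ∈ T, w i : ℝ)| + n * C) / ε + C := by gcongr
      _ < _ := div_add_lt_mul hε n.cast_nonneg hC0 ha1
  · push_cast
    linarith
  · rw [Equiv.sum_comp T'.equivFin.symm (fun i => w i), sum_coe_sort, add_comm, sum_sdiff hT'T]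

/-- If `A ⊆ ℤ⁺` is geometrically sparse then for every `n ≥ 1` there are
`c, d > 0` such that every nonzero `a ∈ Σ_n(±A)` can be written `a = a_1 + ⋯ + a_k + q`
with `k ≤ n`, each `a_i ∈ ±A` with `|a_i| < c|a|`, and `|q| ≤ d`. -/
theorem geomSparse_decomposition (A : Set ℤ) (hApos : ∀ x ∈ A, 0 < x) (hGS : GeomSparse A) :
    ∀ n : ℕ, 1 ≤ n → ∃ c d : ℝ, 0 < c ∧ 0 < d ∧
      ∀ a ∈ sigmaSum n (pmSet A), a ≠ 0 →
        ∃ k : ℕ, k ≤ n ∧ ∃ (g : Fin k → ℤ) (q : ℤ),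
          (∀ i, g i ∈ pmSet A ∧ (|g i| : ℝ) < c * (|a| : ℝ)) ∧
          (|q| : ℝ) ≤ d ∧ a = (∑ i, g i) + q :=
  geomSparse_decomposition_general A hGS
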